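/- arXiv:2307.13474 — 2 statements merged into one kernel-verified Lean document; each statement's English description precedes it below -/
import Mathlib

section
/- (Theorem 2 converse, individual key rate) In the secure aggregation with an oblivious server and user dropouts model, assuming dropout correctness and server security (user security is not needed), let U_1 = [K] and, for j = 3, 4, …, K, let U^{(j)} = [K]\{j}. Then H(Z_1 | X_1, Y_1^{U_1}, (Y_1^{U^{(j)}})_{j=3,…,K}) ≥ K·L; consequently H(Z_1) ≥ K·L, so L_Z ≥ K·L and R_Z = L_Z/L ≥ K. -/
open Classical
open scoped BigOperators

/-- Probability of the event `E` under the probability mass function `p`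
on a finite sample space `Ω`. -/
noncomputable def pr {Ω : Type*} [Fintype Ω] (p : Ω → ℝ) (E : Ω → Prop) : ℝ :=
  ∑ ω, if E ω then p ω else 0

/-- Shannon entropy of the random variable `X` in base-`q` units. -/
noncomputable def ent {Ω α : Type*} [Fintype Ω] [Fintype α] (q : ℕ) (p : Ω → ℝ)
    (X : Ω → α) : ℝ :=
  -∑ a, pr p (fun ω => X ω = a) * Real.logb q (pr p (fun ω => X ω = a))

/-- Conditional entropy `H(X | Y) = H(X, Y) − H(Y)`, base `q`. -/
noncomputable def condEnt {Ω α β : Type*} [Fintype Ω] [Fintype α] [Fintype β]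
    (q : ℕ) (p : Ω → ℝ) (X : Ω → α) (Y : Ω → β) : ℝ :=
  ent q p (fun ω => (X ω, Y ω)) - ent q p Y

/-- Mutual information `I(X ; Y) = H(X) + H(Y) − H(X, Y)`, base `q`. -/
noncomputable def mutInf {Ω α β : Type*} [Fintype Ω] [Fintype α] [Fintype β]
    (q : ℕ) (p : Ω → ℝ) (X : Ω → α) (Y : Ω → β) : ℝ :=
  ent q p X + ent q p Y - ent q p (fun ω => (X ω, Y ω))

/-- Conditional mutual information
`I(X ; Y | Z) = H(X, Z) + H(Y, Z) − H(X, Y, Z) − H(Z)`, base `q`. -/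
noncomputable def condMutInf {Ω α β γ : Type*} [Fintype Ω] [Fintype α] [Fintype β] [Fintype γ]
    (q : ℕ) (p : Ω → ℝ) (X : Ω → α) (Y : Ω → β) (Z : Ω → γ) : ℝ :=
  ent q p (fun ω => (X ω, Z ω)) + ent q p (fun ω => (Y ω, Z ω))
    - ent q p (fun ω => (X ω, Y ω, Z ω)) - ent q p Z

section Lib
variable {Ω : Type*} [Fintype Ω] {p : Ω → ℝ}

lemma pr_nonneg (hp0 : ∀ ω, 0 ≤ p ω) (E : Ω → Prop) : 0 ≤ pr p E := by
  refine Finset.sum_nonneg fun ω _ => ?_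
  split
  · exact hp0 ω
  · exact le_rfl

lemma pr_congr {E E' : Ω → Prop} (h : ∀ ω, E ω ↔ E' ω) : pr p E = pr p E' := by
  unfold pr; refine Finset.sum_congr rfl fun ω _ => ?_
  simp [h ω]

lemma pr_mono (hp0 : ∀ ω, 0 ≤ p ω) {E E' : Ω → Prop} (h : ∀ ω, E ω → E' ω) :
    pr p E ≤ pr p E' := by
  refine Finset.sum_le_sum fun ω _ => ?_
  by_cases hE : E ω
  · simp [hE, h ω hE]
  · simp only [hE, if_false]
    split
    · exact hp0 ω
    · exact le_rfl

lemma exists_of_pr_ne_zero {E : Ω → Prop} (h : pr p E ≠ 0) : ∃ ω, p ω ≠ 0 ∧ E ω := by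
  obtain ⟨ω, -, hω⟩ := Finset.exists_ne_zero_of_sum_ne_zero h
  by_cases hE : E ω
  · exact ⟨ω, by simpa [hE] using hω, hE⟩
  · simp [hE] at hω

lemma pr_pos (hp0 : ∀ ω, 0 ≤ p ω) {E : Ω → Prop} {ω : Ω} (hω : p ω ≠ 0) (hE : E ω) :
    0 < pr p E := by
  have h1 : (if E ω then p ω else 0) ≤ pr p E := by
    refine Finset.single_le_sum (f := fun ω' => if E ω' then p ω' else 0)
      (fun ω' _ => ?_) (Finset.mem_univ ω)
    split
    · exact hp0 ω'
    · exact le_rfl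
  rw [if_pos hE] at h1
  exact lt_of_lt_of_le (lt_of_le_of_ne (hp0 ω) (Ne.symm hω)) h1

lemma pr_sum_fiber {α : Type*} [Fintype α] (X : Ω → α) (E : Ω → Prop) :
    ∑ a, pr p (fun ω => X ω = a ∧ E ω) = pr p E := by
  unfold pr
  rw [Finset.sum_comm]
  refine Finset.sum_congr rfl fun ω _ => ?_
  by_cases hE : E ω
  · simp only [hE, and_true]
    rw [Finset.sum_congr rfl (fun a _ => ?_), Finset.sum_ite_eq Finset.univ (X ω) (fun _ => p ω)]
    · simp
    · simp [eq_comm]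
  · simp [hE]

lemma pr_sum_eq_one (hp1 : (∑ ω, p ω) = 1) {α : Type*} [Fintype α] (X : Ω → α) :
    ∑ a, pr p (fun ω => X ω = a) = 1 := by
  have := pr_sum_fiber (p := p) X (fun _ => True)
  simp only [and_true] at this
  rw [this]; unfold pr; simpa using hp1

/-- natural-log entropy -/
noncomputable def nent {α : Type*} [Fintype α] (p : Ω → ℝ) (X : Ω → α) : ℝ :=
  -∑ a, pr p (fun ω => X ω = a) * Real.log (pr p (fun ω => X ω = a))

lemma ent_eq_nent {α : Type*} [Fintype α] (q : ℕ) (X : Ω → α) :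
    ent q p X = nent p X / Real.log q := by
  unfold ent nent Real.logb
  rw [neg_div, Finset.sum_div]
  congr 1
  exact Finset.sum_congr rfl fun a _ => by ring

lemma nent_comp_inj {α β : Type*} [Fintype α] [Fintype β] {f : α → β}
    (hf : Function.Injective f) (X : Ω → α) :
    nent p (fun ω => f (X ω)) = nent p X := by
  unfold nent
  congr 1
  have hvan : ∀ b ∈ Finset.univ, b ∉ Finset.univ.image f →
      pr p (fun ω => f (X ω) = b) * Real.log (pr p (fun ω => f (X ω) = b)) = 0 := by
    intro b _ hb
    have : pr p (fun ω => f (X ω) = b) = pr p (fun _ => False) := by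
      refine pr_congr fun ω => ⟨fun h => absurd ?_ hb, False.elim⟩
      exact Finset.mem_image.2 ⟨X ω, Finset.mem_univ _, h⟩
    rw [this]
    simp [pr]
  rw [← Finset.sum_subset (Finset.subset_univ (Finset.univ.image f)) hvan,
    Finset.sum_image (fun a _ a' _ h => hf h)]
  refine Finset.sum_congr rfl fun a _ => ?_
  have : pr p (fun ω => f (X ω) = f a) = pr p (fun ω => X ω = a) :=
    pr_congr fun ω => hf.eq_iff
  rw [this]

lemma nent_const (hp1 : (∑ ω, p ω) = 1) {α : Type*} [Fintype α] (c : α) :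
    nent p (fun _ => c) = 0 := by
  unfold nent
  rw [neg_eq_zero]
  refine Finset.sum_eq_zero fun a _ => ?_
  by_cases h : c = a
  · subst h
    have h1 : pr p (fun _ : Ω => c = c) = 1 := by unfold pr; simpa using hp1
    show pr p (fun _ : Ω => c = c) * Real.log (pr p (fun _ : Ω => c = c)) = 0
    rw [h1]; simp
  · have h1 : pr p (fun _ : Ω => c = a) = 0 := by unfold pr; simp [h]
    show pr p (fun _ : Ω => c = a) * Real.log (pr p (fun _ : Ω => c = a)) = 0
    rw [h1]; simp

end Lib

section Lib2
variable {Ω : Type*} [Fintype Ω] {p : Ω → ℝ}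

lemma pr_pair_snd {α β : Type*} [Fintype α] [Fintype β] (X : Ω → α) (Y : Ω → β) (b : β) :
    pr p (fun ω => Y ω = b) = ∑ a, pr p (fun ω => (X ω, Y ω) = (a, b)) := by
  rw [← pr_sum_fiber X (fun ω => Y ω = b)]
  exact Finset.sum_congr rfl fun a _ => pr_congr fun ω => by
    constructor
    · rintro ⟨h1, h2⟩; rw [h1, h2]
    · intro h; exact ⟨(Prod.ext_iff.1 h).1, (Prod.ext_iff.1 h).2⟩

lemma pr_pair_le_snd (hp0 : ∀ ω, 0 ≤ p ω) {α β : Type*} (X : Ω → α) (Y : Ω → β) (a : α) (b : β) :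
    pr p (fun ω => (X ω, Y ω) = (a, b)) ≤ pr p (fun ω => Y ω = b) :=
  pr_mono hp0 fun ω h => (Prod.ext_iff.1 h).2

/-- `H(A,B) − H(B)` as a sum of terms. -/
lemma nent_pair_sub {α β : Type*} [Fintype α] [Fintype β] (A : Ω → α) (B : Ω → β) :
    nent p (fun ω => (A ω, B ω)) - nent p B
      = ∑ b, ∑ a, pr p (fun ω => (A ω, B ω) = (a, b)) *
          (Real.log (pr p (fun ω => B ω = b)) - Real.log (pr p (fun ω => (A ω, B ω) = (a, b)))) := by
  unfold nent
  rw [Fintype.sum_prod_type, Finset.sum_comm]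
  rw [neg_sub_neg]
  rw [← Finset.sum_sub_distrib]
  refine Finset.sum_congr rfl fun b _ => ?_
  rw [pr_pair_snd A B b, Finset.sum_mul, ← Finset.sum_sub_distrib]
  exact Finset.sum_congr rfl fun a _ => by ring

lemma nent_pair_sub_term_nonneg (hp0 : ∀ ω, 0 ≤ p ω) {α β : Type*} [Fintype α] [Fintype β]
    (A : Ω → α) (B : Ω → β) (a : α) (b : β) :
    0 ≤ pr p (fun ω => (A ω, B ω) = (a, b)) *
        (Real.log (pr p (fun ω => B ω = b)) - Real.log (pr p (fun ω => (A ω, B ω) = (a, b)))) := by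
  rcases eq_or_lt_of_le (pr_nonneg hp0 (fun ω => (A ω, B ω) = (a, b))) with h0 | h0
  · rw [← h0]; simp
  · exact mul_nonneg (le_of_lt h0)
      (sub_nonneg.2 (Real.log_le_log h0 (pr_pair_le_snd hp0 A B a b)))

/-- `H(B) ≤ H(A,B)`. -/
lemma nent_pair_ge_snd (hp0 : ∀ ω, 0 ≤ p ω) {α β : Type*} [Fintype α] [Fintype β]
    (A : Ω → α) (B : Ω → β) :
    nent p B ≤ nent p (fun ω => (A ω, B ω)) := by
  have := nent_pair_sub (p := p) A B
  have h2 : 0 ≤ nent p (fun ω => (A ω, B ω)) - nent p B := by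
    rw [this]
    exact Finset.sum_nonneg fun b _ => Finset.sum_nonneg fun a _ =>
      nent_pair_sub_term_nonneg hp0 A B a b
  linarith

/-- If `B` determines `A` almost surely, then `H(A,B) = H(B)`. -/
lemma nent_pair_eq_of_det (hp0 : ∀ ω, 0 ≤ p ω) {α β : Type*} [Fintype α] [Fintype β]
    {A : Ω → α} {B : Ω → β}
    (h : ∀ ω ω', p ω ≠ 0 → p ω' ≠ 0 → B ω = B ω' → A ω = A ω') :
    nent p (fun ω => (A ω, B ω)) = nent p B := by
  have key := nent_pair_sub (p := p) A B
  have hz : ∀ b ∈ Finset.univ, ∀ a ∈ Finset.univ, pr p (fun ω => (A ω, B ω) = (a, b)) *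
      (Real.log (pr p (fun ω => B ω = b)) - Real.log (pr p (fun ω => (A ω, B ω) = (a, b)))) = 0 := by
    intro b _ a _
    rcases eq_or_ne (pr p (fun ω => (A ω, B ω) = (a, b))) 0 with h0 | h0
    · rw [h0]; ring
    · have hs : pr p (fun ω => B ω = b) = pr p (fun ω => (A ω, B ω) = (a, b)) := by
        rw [pr_pair_snd A B b]
        refine Finset.sum_eq_single a (fun a' _ ha' => ?_)
          (fun h' => absurd (Finset.mem_univ a) h')
        by_contra hne
        obtain ⟨ω', hω', hE'⟩ := exists_of_pr_ne_zero hne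
        obtain ⟨ω, hω, hE⟩ := exists_of_pr_ne_zero h0
        rw [Prod.mk.injEq] at hE hE'
        have hB : B ω' = B ω := by rw [hE'.2, hE.2]
        have := h ω' ω hω' hω hB
        rw [hE'.1, hE.1] at this
        exact ha' this
      rw [hs]; ring
  have : nent p (fun ω => (A ω, B ω)) - nent p B = 0 := by
    rw [key]
    exact Finset.sum_eq_zero fun b hb => Finset.sum_eq_zero fun a ha => hz b hb a ha
  linarith

/-- pointwise determinism version -/
lemma nent_pair_eq_of_fun {α β : Type*} [Fintype α] [Fintype β]
    (hp0 : ∀ ω, 0 ≤ p ω) {A : Ω → α} {B : Ω → β} (f : β → α) (hf : ∀ ω, A ω = f (B ω)) :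
    nent p (fun ω => (A ω, B ω)) = nent p B :=
  nent_pair_eq_of_det hp0 fun ω ω' _ _ hB => by rw [hf ω, hf ω', hB]

/-- Extracting a.s. determinism from `H(A|B) = 0`. -/
lemma det_of_condEnt_zero {q : ℕ} (hq : 1 < q) (hp0 : ∀ ω, 0 ≤ p ω)
    {α β : Type*} [Fintype α] [Fintype β] {A : Ω → α} {B : Ω → β}
    (h : condEnt q p A B = 0) :
    ∀ ω ω', p ω ≠ 0 → p ω' ≠ 0 → B ω = B ω' → A ω = A ω' := by
  have hlq : (0:ℝ) < Real.log q := Real.log_pos (by exact_mod_cast hq)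
  have heq : nent p (fun ω => (A ω, B ω)) - nent p B = 0 := by
    unfold condEnt at h
    rw [ent_eq_nent, ent_eq_nent, div_sub_div_same, div_eq_zero_iff] at h
    rcases h with h' | h'
    · exact h'
    · exact absurd h' (ne_of_gt hlq)
  rw [nent_pair_sub A B] at heq
  have hz := (Finset.sum_eq_zero_iff_of_nonneg (fun b _ =>
      Finset.sum_nonneg fun a _ => nent_pair_sub_term_nonneg hp0 A B a b)).1 heq
  intro ω ω' hω hω' hB
  by_contra hne
  have hta : pr p (fun ω'' => (A ω'', B ω'') = (A ω, B ω)) ≠ 0 :=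
    ne_of_gt (pr_pos hp0 hω rfl)
  have hta' : pr p (fun ω'' => (A ω'', B ω'') = (A ω', B ω)) ≠ 0 :=
    ne_of_gt (pr_pos hp0 hω' (by rw [Prod.mk.injEq]; exact ⟨rfl, hB.symm⟩))
  have hzb := (Finset.sum_eq_zero_iff_of_nonneg (fun a _ =>
      nent_pair_sub_term_nonneg hp0 A B a (B ω))).1 (hz (B ω) (Finset.mem_univ _))
      (A ω) (Finset.mem_univ _)
  have hta_pos : 0 < pr p (fun ω'' => (A ω'', B ω'') = (A ω, B ω)) :=
    lt_of_le_of_ne (pr_nonneg hp0 _) (Ne.symm hta)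
  have hta'_pos : 0 < pr p (fun ω'' => (A ω'', B ω'') = (A ω', B ω)) :=
    lt_of_le_of_ne (pr_nonneg hp0 _) (Ne.symm hta')
  have hlog : Real.log (pr p (fun ω'' => B ω'' = B ω))
      = Real.log (pr p (fun ω'' => (A ω'', B ω'') = (A ω, B ω))) := by
    rcases mul_eq_zero.1 hzb with h' | h'
    · exact absurd h' hta
    · linarith [sub_eq_zero.1 h']
  have hsb : pr p (fun ω'' => B ω'' = B ω) = pr p (fun ω'' => (A ω'', B ω'') = (A ω, B ω)) := by
    have hsb_pos : 0 < pr p (fun ω'' => B ω'' = B ω) :=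
      lt_of_lt_of_le hta_pos (pr_pair_le_snd hp0 A B (A ω) (B ω))
    rw [← Real.exp_log hsb_pos, ← Real.exp_log hta_pos, hlog]
  have htwo : pr p (fun ω'' => (A ω'', B ω'') = (A ω, B ω))
        + pr p (fun ω'' => (A ω'', B ω'') = (A ω', B ω))
      ≤ pr p (fun ω'' => B ω'' = B ω) := by
    rw [pr_pair_snd A B (B ω)]
    exact Finset.add_le_sum
      (f := fun a'' => pr p (fun ω'' => (A ω'', B ω'') = (a'', B ω)))
      (fun a'' _ => pr_nonneg hp0 _)
      (Finset.mem_univ (A ω)) (Finset.mem_univ (A ω')) hne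
  rw [hsb] at htwo
  linarith

end Lib2

section Lib3
variable {Ω : Type*} [Fintype Ω] {p : Ω → ℝ}

lemma key_term {t u v s : ℝ} (ht : 0 ≤ t) (htu : t ≤ u) (htv : t ≤ v) (hts : t ≤ s) :
    t * Real.log u + t * Real.log v - t * Real.log t - t * Real.log s ≤ u * v / s - t := by
  rcases eq_or_lt_of_le ht with h0 | h0
  · rw [← h0]
    have : (0:ℝ) ≤ u * v / s := div_nonneg (mul_nonneg (by linarith) (by linarith)) (by linarith)
    simpa using this
  · have hu0 : 0 < u := lt_of_lt_of_le h0 htu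
    have hv0 : 0 < v := lt_of_lt_of_le h0 htv
    have hs0 : 0 < s := lt_of_lt_of_le h0 hts
    have hlog : Real.log u + Real.log v - Real.log t - Real.log s
        = Real.log (u * v / (t * s)) := by
      rw [Real.log_div (by positivity) (by positivity), Real.log_mul (ne_of_gt hu0)
        (ne_of_gt hv0), Real.log_mul (ne_of_gt h0) (ne_of_gt hs0)]
      ring
    have hb : Real.log (u * v / (t * s)) ≤ u * v / (t * s) - 1 :=
      Real.log_le_sub_one_of_pos (by positivity)
    have : t * Real.log (u * v / (t * s)) ≤ t * (u * v / (t * s) - 1) :=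
      mul_le_mul_of_nonneg_left hb ht
    have heq : t * (u * v / (t * s) - 1) = u * v / s - t := by
      field_simp
    calc t * Real.log u + t * Real.log v - t * Real.log t - t * Real.log s
        = t * (Real.log u + Real.log v - Real.log t - Real.log s) := by ring
      _ = t * Real.log (u * v / (t * s)) := by rw [hlog]
      _ ≤ t * (u * v / (t * s) - 1) := this
      _ = u * v / s - t := heq

lemma gibbs {α β γ : Type*} [Fintype α] [Fintype β] [Fintype γ]
    (T : α → β → γ → ℝ) (u : α → γ → ℝ) (v : β → γ → ℝ) (s : γ → ℝ)
    (hT : ∀ a b c, 0 ≤ T a b c)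
    (hu : ∀ a c, u a c = ∑ b, T a b c)
    (hv : ∀ b c, v b c = ∑ a, T a b c)
    (hs : ∀ c, s c = ∑ a, u a c)
    (h1 : ∑ c, s c = 1) :
    ∑ a, ∑ c, u a c * Real.log (u a c) + ∑ b, ∑ c, v b c * Real.log (v b c)
      ≤ (∑ a, ∑ b, ∑ c, T a b c * Real.log (T a b c)) + ∑ c, s c * Real.log (s c) := by
  have hTu : ∀ a b c, T a b c ≤ u a c := fun a b c => by
    rw [hu]
    exact Finset.single_le_sum (f := fun b => T a b c) (fun b _ => hT a b c) (Finset.mem_univ b)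
  have hTv : ∀ a b c, T a b c ≤ v b c := fun a b c => by
    rw [hv]
    exact Finset.single_le_sum (f := fun a => T a b c) (fun a _ => hT a b c) (Finset.mem_univ a)
  have hu0 : ∀ a c, 0 ≤ u a c := fun a c => by
    rw [hu]; exact Finset.sum_nonneg fun b _ => hT a b c
  have hus : ∀ a c, u a c ≤ s c := fun a c => by
    rw [hs]
    exact Finset.single_le_sum (f := fun a => u a c) (fun a _ => hu0 a c) (Finset.mem_univ a)
  have hTs : ∀ a b c, T a b c ≤ s c := fun a b c => le_trans (hTu a b c) (hus a c)
  have hsv : ∀ c, s c = ∑ b, v b c := by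
    intro c
    rw [hs]
    simp only [hu, hv]
    exact Finset.sum_comm
  -- canonical forms
  have eU : ∑ a, ∑ c, u a c * Real.log (u a c)
      = ∑ a, ∑ b, ∑ c, T a b c * Real.log (u a c) := by
    refine Finset.sum_congr rfl fun a _ => ?_
    rw [Finset.sum_comm]
    refine Finset.sum_congr rfl fun c _ => ?_
    rw [hu, Finset.sum_mul]
  have eV : ∑ b, ∑ c, v b c * Real.log (v b c)
      = ∑ a, ∑ b, ∑ c, T a b c * Real.log (v b c) := by
    have step : ∀ b, ∑ c, v b c * Real.log (v b c) = ∑ a, ∑ c, T a b c * Real.log (v b c) := by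
      intro b
      rw [Finset.sum_comm]
      refine Finset.sum_congr rfl fun c _ => ?_
      rw [hv, Finset.sum_mul]
    calc ∑ b, ∑ c, v b c * Real.log (v b c) = ∑ b, ∑ a, ∑ c, T a b c * Real.log (v b c) := by
          exact Finset.sum_congr rfl fun b _ => step b
      _ = ∑ a, ∑ b, ∑ c, T a b c * Real.log (v b c) := Finset.sum_comm
  have eS : ∑ c, s c * Real.log (s c)
      = ∑ a, ∑ b, ∑ c, T a b c * Real.log (s c) := by
    have step : ∑ c, s c * Real.log (s c) = ∑ c, ∑ a, ∑ b, T a b c * Real.log (s c) := by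
      refine Finset.sum_congr rfl fun c _ => ?_
      rw [hs, Finset.sum_mul]
      refine Finset.sum_congr rfl fun a _ => ?_
      rw [hu, Finset.sum_mul]
    rw [step]
    calc ∑ c, ∑ a, ∑ b, T a b c * Real.log (s c)
        = ∑ a, ∑ c, ∑ b, T a b c * Real.log (s c) := Finset.sum_comm
      _ = ∑ a, ∑ b, ∑ c, T a b c * Real.log (s c) :=
          Finset.sum_congr rfl fun a _ => Finset.sum_comm
  rw [eU, eV, eS]
  -- combine into a single sum bound
  have hterm : ∀ a b c, T a b c * Real.log (u a c) + T a b c * Real.log (v b c)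
      - T a b c * Real.log (T a b c) - T a b c * Real.log (s c)
      ≤ u a c * v b c / s c - T a b c := fun a b c =>
    key_term (hT a b c) (hTu a b c) (hTv a b c) (hTs a b c)
  have hTsum : ∑ a, ∑ b, ∑ c, T a b c = 1 := by
    have : ∑ a, ∑ b, ∑ c, T a b c = ∑ c, ∑ a, ∑ b, T a b c := by
      calc ∑ a, ∑ b, ∑ c, T a b c = ∑ a, ∑ c, ∑ b, T a b c :=
            Finset.sum_congr rfl fun a _ => Finset.sum_comm
        _ = ∑ c, ∑ a, ∑ b, T a b c := Finset.sum_comm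
    rw [this, ← h1]
    refine Finset.sum_congr rfl fun c _ => ?_
    rw [hs]
    exact Finset.sum_congr rfl fun a _ => (hu a c).symm
  have hRHSsum : ∑ a, ∑ b, ∑ c, (u a c * v b c / s c - T a b c) = 0 := by
    have e1 : ∑ a, ∑ b, ∑ c, u a c * v b c / s c = ∑ c, ∑ a, ∑ b, u a c * v b c / s c := by
      calc ∑ a, ∑ b, ∑ c, u a c * v b c / s c = ∑ a, ∑ c, ∑ b, u a c * v b c / s c :=
            Finset.sum_congr rfl fun a _ => Finset.sum_comm
        _ = ∑ c, ∑ a, ∑ b, u a c * v b c / s c := Finset.sum_comm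
    have e2 : ∀ c, ∑ a, ∑ b, u a c * v b c / s c = s c := by
      intro c
      have : ∑ a, ∑ b, u a c * v b c / s c = (∑ a, u a c) * (∑ b, v b c) / s c := by
        rw [Finset.sum_mul, Finset.sum_div]
        refine Finset.sum_congr rfl fun a _ => ?_
        rw [Finset.mul_sum, Finset.sum_div]
      rw [this, ← hs, ← hsv]
      rcases eq_or_ne (s c) 0 with h0 | h0
      · rw [h0]; simp
      · rw [mul_div_assoc, div_self h0, mul_one]
    simp only [Finset.sum_sub_distrib]
    rw [e1, hTsum]
    have : ∑ c, ∑ a, ∑ b, u a c * v b c / s c = 1 := by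
      rw [← h1]
      exact Finset.sum_congr rfl fun c _ => e2 c
    rw [this]
    ring
  have hmain : ∑ a, ∑ b, ∑ c, (T a b c * Real.log (u a c) + T a b c * Real.log (v b c)
      - T a b c * Real.log (T a b c) - T a b c * Real.log (s c)) ≤ 0 := by
    calc ∑ a, ∑ b, ∑ c, (T a b c * Real.log (u a c) + T a b c * Real.log (v b c)
          - T a b c * Real.log (T a b c) - T a b c * Real.log (s c))
        ≤ ∑ a, ∑ b, ∑ c, (u a c * v b c / s c - T a b c) := by
          refine Finset.sum_le_sum fun a _ => Finset.sum_le_sum fun b _ =>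
            Finset.sum_le_sum fun c _ => hterm a b c
      _ = 0 := hRHSsum
  simp only [sub_sub_eq_add_sub, Finset.sum_sub_distrib, Finset.sum_add_distrib] at hmain
  linarith

end Lib3

section Lib4
variable {Ω : Type*} [Fintype Ω] {p : Ω → ℝ}

lemma nent_cmi (hp0 : ∀ ω, 0 ≤ p ω) (hp1 : (∑ ω, p ω) = 1)
    {α β γ : Type*} [Fintype α] [Fintype β] [Fintype γ]
    (A : Ω → α) (B : Ω → β) (C : Ω → γ) :
    nent p (fun ω => (A ω, B ω, C ω)) + nent p C
      ≤ nent p (fun ω => (A ω, C ω)) + nent p (fun ω => (B ω, C ω)) := by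
  classical
  set T := fun (a : α) (b : β) (c : γ) => pr p (fun ω => (A ω, B ω, C ω) = (a, b, c)) with hT
  set u := fun (a : α) (c : γ) => pr p (fun ω => (A ω, C ω) = (a, c)) with hu
  set v := fun (b : β) (c : γ) => pr p (fun ω => (B ω, C ω) = (b, c)) with hv
  set s := fun (c : γ) => pr p (fun ω => C ω = c) with hs
  have hT0 : ∀ a b c, 0 ≤ T a b c := fun a b c => pr_nonneg hp0 _
  have hum : ∀ a c, u a c = ∑ b, T a b c := by
    intro a c
    have e1 : u a c = pr p (fun ω => A ω = a ∧ C ω = c) :=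
      pr_congr fun ω => by simp only [Prod.mk.injEq]
    rw [e1, ← pr_sum_fiber B (fun ω => A ω = a ∧ C ω = c)]
    exact Finset.sum_congr rfl fun b _ => pr_congr fun ω => by
      simp only [Prod.mk.injEq]; try tauto
  have hvm : ∀ b c, v b c = ∑ a, T a b c := by
    intro b c
    have e1 : v b c = pr p (fun ω => B ω = b ∧ C ω = c) :=
      pr_congr fun ω => by simp only [Prod.mk.injEq]
    rw [e1, ← pr_sum_fiber A (fun ω => B ω = b ∧ C ω = c)]
    exact Finset.sum_congr rfl fun a _ => pr_congr fun ω => by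
      simp only [Prod.mk.injEq]; try tauto
  have hsm : ∀ c, s c = ∑ a, u a c := fun c => pr_pair_snd A C c
  have h1 : ∑ c, s c = 1 := pr_sum_eq_one hp1 C
  have hg := gibbs T u v s hT0 hum hvm hsm h1
  have eACn : nent p (fun ω => (A ω, C ω)) = -∑ a, ∑ c, u a c * Real.log (u a c) := by
    unfold nent
    rw [Fintype.sum_prod_type]
  have eBCn : nent p (fun ω => (B ω, C ω)) = -∑ b, ∑ c, v b c * Real.log (v b c) := by
    unfold nent
    rw [Fintype.sum_prod_type]
  have eCn : nent p C = -∑ c, s c * Real.log (s c) := by unfold nent; rfl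
  have eTn : nent p (fun ω => (A ω, B ω, C ω))
      = -∑ a, ∑ b, ∑ c, T a b c * Real.log (T a b c) := by
    unfold nent
    rw [Fintype.sum_prod_type]
    congr 1
    exact Finset.sum_congr rfl fun a _ => Fintype.sum_prod_type _
  rw [eACn, eBCn, eCn, eTn]
  linarith

/-- subadditivity: `H(A,B) ≤ H(A) + H(B)` -/
lemma nent_pair_le_add (hp0 : ∀ ω, 0 ≤ p ω) (hp1 : (∑ ω, p ω) = 1)
    {α β : Type*} [Fintype α] [Fintype β] (A : Ω → α) (B : Ω → β) :
    nent p (fun ω => (A ω, B ω)) ≤ nent p A + nent p B := by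
  have h := nent_cmi hp0 hp1 A B (fun _ => (0 : Fin 1))
  have e1 : nent p (fun ω => (A ω, (0 : Fin 1))) = nent p A :=
    nent_comp_inj (f := fun a => (a, (0 : Fin 1))) (fun x y h => by
      simpa using congrArg Prod.fst h) A
  have e2 : nent p (fun ω => (B ω, (0 : Fin 1))) = nent p B :=
    nent_comp_inj (f := fun b => (b, (0 : Fin 1))) (fun x y h => by
      simpa using congrArg Prod.fst h) B
  have e3 : nent p (fun ω => (A ω, B ω, (0 : Fin 1)))
      = nent p (fun ω => (A ω, B ω)) := by
    exact nent_comp_inj (f := fun ab : α × β => (ab.1, ab.2, (0 : Fin 1)))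
      (fun x y h => by
        have h1 := congrArg Prod.fst h
        have h2 := congrArg (fun z => z.2.1) h
        simp at h1 h2
        exact Prod.ext h1 h2) (fun ω => (A ω, B ω))
  have e4 : nent p (fun _ : Ω => (0 : Fin 1)) = 0 := nent_const hp1 _
  rw [e1, e2, e3, e4] at h
  linarith

/-- max entropy bound -/
lemma nent_le_log_card (hp0 : ∀ ω, 0 ≤ p ω) (hp1 : (∑ ω, p ω) = 1)
    {α : Type*} [Fintype α] (X : Ω → α) :
    nent p X ≤ Real.log (Fintype.card α) := by
  have hΩ : Nonempty Ω := by
    rcases isEmpty_or_nonempty Ω with h | h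
    · exfalso; rw [Finset.univ_eq_empty, Finset.sum_empty] at hp1; norm_num at hp1
    · exact h
  have hα : Nonempty α := ⟨X (Classical.choice hΩ)⟩
  have hN : (0:ℝ) < (Fintype.card α : ℝ) := by
    exact_mod_cast Fintype.card_pos
  set N := (Fintype.card α : ℝ) with hNdef
  set t := fun a => pr p (fun ω => X ω = a) with ht
  have hterm : ∀ a, t a * (-Real.log N) - t a * Real.log (t a) ≤ 1 / N - t a := by
    intro a
    rcases eq_or_lt_of_le (pr_nonneg hp0 (fun ω => X ω = a)) with h0 | h0
    · rw [ht]; simp only [← h0]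
      have : (0:ℝ) ≤ 1 / N := by positivity
      simpa using this
    · have h0' : 0 < t a := h0
      have hlog : -Real.log N - Real.log (t a) = Real.log (1 / (N * t a)) := by
        rw [Real.log_div one_ne_zero (by positivity), Real.log_mul (ne_of_gt hN) (ne_of_gt h0')]
        rw [Real.log_one]
        ring
      have hb : Real.log (1 / (N * t a)) ≤ 1 / (N * t a) - 1 :=
        Real.log_le_sub_one_of_pos (by positivity)
      have h2 : t a * Real.log (1 / (N * t a)) ≤ t a * (1 / (N * t a) - 1) :=
        mul_le_mul_of_nonneg_left hb (le_of_lt h0')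
      have heq : t a * (1 / (N * t a) - 1) = 1 / N - t a := by
        field_simp
      calc t a * (-Real.log N) - t a * Real.log (t a)
          = t a * (-Real.log N - Real.log (t a)) := by ring
        _ = t a * Real.log (1 / (N * t a)) := by rw [hlog]
        _ ≤ t a * (1 / (N * t a) - 1) := h2
        _ = 1 / N - t a := heq
  have hsum : ∑ a, (t a * (-Real.log N) - t a * Real.log (t a)) ≤ 0 := by
    calc ∑ a, (t a * (-Real.log N) - t a * Real.log (t a))
        ≤ ∑ a, (1 / N - t a) := Finset.sum_le_sum fun a _ => hterm a
      _ = (Fintype.card α : ℝ) * (1 / N) - 1 := by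
          rw [Finset.sum_sub_distrib, Finset.sum_const, Finset.card_univ]
          rw [pr_sum_eq_one hp1 X]
          simp [nsmul_eq_mul]
      _ = 0 := by rw [mul_one_div, ← hNdef, div_self (ne_of_gt hN), sub_self]
  have hexp : ∑ a, (t a * (-Real.log N) - t a * Real.log (t a))
      = -Real.log N * (∑ a, t a) + nent p X := by
    unfold nent
    rw [Finset.sum_sub_distrib, ← Finset.sum_mul]
    ring
  rw [hexp, pr_sum_eq_one hp1 X] at hsum
  linarith

/-- entropy of a uniform variable -/
lemma nent_uniform {α : Type*} [Fintype α] (X : Ω → α)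
    (hcard : 0 < Fintype.card α)
    (h : ∀ a, pr p (fun ω => X ω = a) = ((Fintype.card α : ℝ))⁻¹) :
    nent p X = Real.log (Fintype.card α) := by
  have hN : ((Fintype.card α : ℝ)) ≠ 0 := by positivity
  unfold nent
  rw [Finset.sum_congr rfl (fun a _ => by rw [h a])]
  rw [Finset.sum_const, Finset.card_univ, nsmul_eq_mul, Real.log_inv]
  field_simp

end Lib4

/-- **Theorem 2 converse, individual key rate.** In the dropout model, assuming
dropout correctness and server security, with `U_1 = [K]` and `U⁽ʲ⁾ = [K] \ {j}`
for `j = 3, …, K` (users `j` with 0-based index `≥ 2`), user 1's key satisfies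
`H(Z_1 | X_1, Y_1^{U_1}, (Y_1^{U⁽ʲ⁾})_j) ≥ K·L`; consequently `H(Z_1) ≥ K·L`,
so `L_Z ≥ K·L` and `R_Z = L_Z / L ≥ K`. -/
theorem theorem2_converse_RZ
    (F : Type) [Field F] [Fintype F]
    (K L LX LY LZ : ℕ) (hK : 2 ≤ K) (hL : 1 ≤ L)
    (Ω : Type) [Fintype Ω] (p : Ω → ℝ)
    (hp0 : ∀ ω, 0 ≤ p ω) (hp1 : (∑ ω, p ω) = 1)
    (W : Fin K → Ω → Fin L → F)
    (Z : Fin K → Ω → Fin LZ → F)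
    (X : Fin K → Ω → Fin LX → F)
    (Y : Finset (Fin K) → Fin K → Ω → Fin LY → F)
    -- inputs i.i.d. uniform on F^L and independent of the keys
    (hWZ : ∀ (w : Fin K → Fin L → F) (z : Fin K → Fin LZ → F),
      pr p (fun ω => (∀ k, W k ω = w k) ∧ (∀ k, Z k ω = z k))
        = (1 / (Fintype.card F : ℝ) ^ L) ^ K * pr p (fun ω => ∀ k, Z k ω = z k))
    -- deterministic encoders X_k = φ_k(W_k, Z_k)
    (hX : ∀ k, ∃ φ : (Fin L → F) → (Fin LZ → F) → Fin LX → F,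
      ∀ ω, X k ω = φ (W k ω) (Z k ω))
    -- deterministic server maps Y_k^U = ψ_k^U((X_u)_{u ∈ U})
    (hY : ∀ (U : Finset (Fin K)), ∀ k ∈ U,
      ∃ ψ : ((u : {u : Fin K // u ∈ U}) → Fin LX → F) → Fin LY → F,
        ∀ ω, Y U k ω = ψ (fun u => X u.1 ω))
    -- dropout correctness: H(Σ_{u ∈ U} W_u | Y_k^U, W_k, Z_k) = 0
    (hCorr : ∀ (U : Finset (Fin K)), ∀ k ∈ U,
      condEnt (Fintype.card F) p (fun ω => ∑ u ∈ U, W u ω)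
        (fun ω => (Y U k ω, W k ω, Z k ω)) = 0)
    -- server security: I(W_1, …, W_K ; X_1, …, X_K) = 0
    (hSec : mutInf (Fintype.card F) p (fun ω => fun k => W k ω)
        (fun ω => fun k => X k ω) = 0) :
    (K : ℝ) * (L : ℝ) ≤ condEnt (Fintype.card F) p (Z ⟨0, by omega⟩)
        (fun ω => (X ⟨0, by omega⟩ ω, Y Finset.univ ⟨0, by omega⟩ ω,
          fun j : {j : Fin K // 2 ≤ (j : ℕ)} =>
            Y (Finset.univ.erase j.1) ⟨0, by omega⟩ ω)) ∧
    (K : ℝ) * (L : ℝ) ≤ ent (Fintype.card F) p (Z ⟨0, by omega⟩) ∧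
    K * L ≤ LZ ∧ (K : ℝ) ≤ (LZ : ℝ) / (L : ℝ) := by
  classical
  have hq : 1 < Fintype.card F := Fintype.one_lt_card
  set q : ℕ := Fintype.card F with hqdef
  have hq1 : (1:ℝ) < (q:ℝ) := by exact_mod_cast hq
  have hq0 : (0:ℝ) < (q:ℝ) := by linarith
  have hlq : (0:ℝ) < Real.log q := Real.log_pos hq1
  have h0K : 0 < K := by omega
  have h1K : 1 < K := by omega
  set k0 : Fin K := ⟨0, h0K⟩ with hk0def
  set k1 : Fin K := ⟨1, h1K⟩ with hk1def
  have hk01 : k0 ≠ k1 := by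
    intro h
    have := congrArg Fin.val h
    simp [hk0def, hk1def] at this
  -- abbreviations
  set Wt : Ω → (Fin K → Fin L → F) := fun ω => fun k => W k ω with hWt
  set Xt : Ω → (Fin K → Fin LX → F) := fun ω => fun k => X k ω with hXt
  set C : Ω → (Fin LX → F) × (Fin LY → F) × ({j : Fin K // 2 ≤ (j : ℕ)} → Fin LY → F) :=
    fun ω => (X k0 ω, Y Finset.univ k0 ω,
      fun j => Y (Finset.univ.erase j.1) k0 ω) with hC
  set Z1 : Ω → Fin LZ → F := Z k0 with hZ1def
  -- Step A : W is uniform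
  have cardW : Fintype.card (Fin K → Fin L → F) = (q ^ L) ^ K := by
    rw [Fintype.card_fun, Fintype.card_fun]
    simp
    rfl
  have cardWpos : 0 < Fintype.card (Fin K → Fin L → F) := by
    rw [cardW]; positivity
  have huW : ∀ w, pr p (fun ω => Wt ω = w)
      = ((Fintype.card (Fin K → Fin L → F) : ℝ))⁻¹ := by
    intro w
    have e1 : pr p (fun ω => Wt ω = w) = pr p (fun ω => ∀ k, W k ω = w k) :=
      pr_congr fun ω => by rw [hWt]; exact funext_iff
    have e2 : pr p (fun ω => ∀ k, W k ω = w k)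
        = ∑ z, pr p (fun ω => (fun ω' => fun k => Z k ω') ω = z ∧ ∀ k, W k ω = w k) :=
      (pr_sum_fiber (fun ω => fun k => Z k ω) (fun ω => ∀ k, W k ω = w k)).symm
    have e3 : ∀ z : Fin K → Fin LZ → F,
        pr p (fun ω => (fun ω' => fun k => Z k ω') ω = z ∧ ∀ k, W k ω = w k)
        = (1 / (q : ℝ) ^ L) ^ K * pr p (fun ω => ∀ k, Z k ω = z k) := by
      intro z
      rw [← hWZ w z]
      refine pr_congr fun ω => ?_
      rw [funext_iff]
      tauto
    have e4 : ∑ z : Fin K → Fin LZ → F, pr p (fun ω => ∀ k, Z k ω = z k) = 1 := by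
      rw [← pr_sum_eq_one hp1 (fun ω => fun k => Z k ω)]
      exact Finset.sum_congr rfl fun z _ => pr_congr fun ω => funext_iff.symm
    rw [e1, e2, Finset.sum_congr rfl fun z _ => e3 z, ← Finset.mul_sum, e4, mul_one]
    rw [cardW]
    push_cast
    rw [one_div, inv_pow]
  -- Step B : entropy of W
  have hWent : nent p Wt = ((K : ℝ) * (L : ℝ)) * Real.log q := by
    rw [nent_uniform Wt cardWpos huW, cardW]
    push_cast
    rw [Real.log_pow, Real.log_pow]
    ring
  -- Step C : independence of W and X
  have hIndep : nent p (fun ω => (Wt ω, Xt ω)) = nent p Wt + nent p Xt := by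
    have h := hSec
    unfold mutInf at h
    rw [ent_eq_nent, ent_eq_nent, ent_eq_nent] at h
    have : (nent p Wt + nent p Xt - nent p (fun ω => (Wt ω, Xt ω))) / Real.log q = 0 := by
      rw [← h]; ring
    rcases div_eq_zero_iff.1 this with h' | h'
    · linarith
    · exact absurd h' (ne_of_gt hlq)
  -- Step D : C is a function of Xt
  have hk0mem : ∀ j : {j : Fin K // 2 ≤ (j : ℕ)}, k0 ∈ Finset.univ.erase j.1 := by
    intro j
    refine Finset.mem_erase.2 ⟨?_, Finset.mem_univ _⟩
    intro h
    have := congrArg Fin.val h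
    have hj := j.2
    simp [hk0def] at this
    omega
  obtain ⟨ψU, hψU⟩ := hY Finset.univ k0 (Finset.mem_univ _)
  have hψj : ∀ j : {j : Fin K // 2 ≤ (j : ℕ)},
      ∃ ψ : ((u : {u : Fin K // u ∈ Finset.univ.erase j.1}) → Fin LX → F) → Fin LY → F,
        ∀ ω, Y (Finset.univ.erase j.1) k0 ω = ψ (fun u => X u.1 ω) :=
    fun j => hY (Finset.univ.erase j.1) k0 (hk0mem j)
  choose ψj hψj' using hψj
  set f : (Fin K → Fin LX → F) →
      (Fin LX → F) × (Fin LY → F) × ({j : Fin K // 2 ≤ (j : ℕ)} → Fin LY → F) :=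
    fun x => (x k0, ψU (fun u => x u.1), fun j => ψj j (fun u => x u.1)) with hf
  have hCf : ∀ ω, C ω = f (Xt ω) := by
    intro ω
    rw [hC, hf]
    refine Prod.ext rfl (Prod.ext ?_ ?_)
    · exact hψU ω
    · funext j
      exact hψj' j ω
  -- Step E : H(W,C) ≥ H(W) + H(C)
  have hWC : nent p Wt + nent p C ≤ nent p (fun ω => (Wt ω, C ω)) := by
    have hcmi := nent_cmi hp0 hp1 Wt Xt C
    have e1 : nent p (fun ω => (Xt ω, C ω)) = nent p Xt := by
      have efun : (fun ω => (Xt ω, C ω)) = (fun ω => ((Xt ω, f (Xt ω)) :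
          (Fin K → Fin LX → F) × _)) := funext fun ω => by rw [hCf ω]
      rw [efun]
      exact nent_comp_inj (f := fun x => (x, f x))
        (fun x y h => by simpa using congrArg Prod.fst h) Xt
    have e2 : nent p (fun ω => (Wt ω, Xt ω, C ω)) = nent p (fun ω => (Wt ω, Xt ω)) := by
      have efun : (fun ω => (Wt ω, Xt ω, C ω))
          = (fun ω => (Wt ω, Xt ω, f (Xt ω))) := funext fun ω => by rw [hCf ω]
      rw [efun]
      exact nent_comp_inj
        (f := fun wx : (Fin K → Fin L → F) × (Fin K → Fin LX → F) => (wx.1, wx.2, f wx.2))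
        (fun x y h => by
          have h1 := congrArg Prod.fst h
          have h2 := congrArg (fun t => t.2.1) h
          simp at h1 h2
          exact Prod.ext h1 h2)
        (fun ω => (Wt ω, Xt ω))
    rw [e1, e2, hIndep] at hcmi
    linarith
  -- Step F : (Z1, C) determines W almost surely
  have hdet : ∀ ω ω', p ω ≠ 0 → p ω' ≠ 0 →
      (fun ω2 => (Z1 ω2, C ω2)) ω = (fun ω2 => (Z1 ω2, C ω2)) ω' → Wt ω = Wt ω' := by
    intro ω ω' hω hω' hEq
    simp only [Prod.mk.injEq] at hEq
    obtain ⟨hZeq, hCeq⟩ := hEq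
    rw [hC, Prod.mk.injEq, Prod.mk.injEq] at hCeq
    obtain ⟨hX1, hYU, hYjf⟩ := hCeq
    have hYj : ∀ j : {j : Fin K // 2 ≤ (j : ℕ)},
        Y (Finset.univ.erase j.1) k0 ω = Y (Finset.univ.erase j.1) k0 ω' :=
      fun j => congrFun hYjf j
    -- step 1 : W k0 ω = W k0 ω'
    have hW1 : W k0 ω = W k0 ω' := by
      obtain ⟨φ0, hφ0⟩ := hX k0
      -- construct a hybrid sample point
      set w'' : Fin K → Fin L → F := fun k => if k = k0 then W k0 ω' else W k ω with hw''
      have hpr := hWZ w'' (fun k => Z k ω)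
      have hZpos : 0 < pr p (fun ω2 => ∀ k, Z k ω2 = Z k ω) :=
        pr_pos hp0 hω (fun k => rfl)
      have hpos : pr p (fun ω2 => (∀ k, W k ω2 = w'' k) ∧ (∀ k, Z k ω2 = Z k ω)) ≠ 0 := by
        rw [hpr]
        have : (0:ℝ) < (1 / (q : ℝ) ^ L) ^ K := by positivity
        exact ne_of_gt (mul_pos this hZpos)
      obtain ⟨ω'', hω'', hW'', hZ''⟩ :
          ∃ ω2, p ω2 ≠ 0 ∧ (∀ k, W k ω2 = w'' k) ∧ (∀ k, Z k ω2 = Z k ω) := by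
        obtain ⟨ω2, h1, h2, h3⟩ := exists_of_pr_ne_zero hpos
        exact ⟨ω2, h1, h2, h3⟩
      have hZeq' : Z k0 ω = Z k0 ω' := hZeq
      have hwk0 : w'' k0 = W k0 ω' := by rw [hw'']; simp
      -- X agrees on ω'' and ω
      have hXall : ∀ u, X u ω'' = X u ω := by
        intro u
        obtain ⟨φu, hφu⟩ := hX u
        by_cases hu : u = k0
        · rw [hu]
          have hWk0'' : W k0 ω'' = W k0 ω' := by rw [hW'' k0, hwk0]
          calc X k0 ω'' = φ0 (W k0 ω'') (Z k0 ω'') := hφ0 ω''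
            _ = φ0 (W k0 ω') (Z k0 ω) := by rw [hWk0'', hZ'' k0]
            _ = φ0 (W k0 ω') (Z k0 ω') := by rw [hZeq']
            _ = X k0 ω' := (hφ0 ω').symm
            _ = X k0 ω := hX1.symm
        · have hwu : w'' u = W u ω := by rw [hw'']; simp [hu]
          rw [hφu ω'', hφu ω, hW'' u, hwu, hZ'' u]
      -- user 2 decodes W k0 + W k1 from Y, and (Y, W k1, Z k1) agree on ω'' and ω
      set U2 : Finset (Fin K) := {k0, k1} with hU2
      have hk1mem : k1 ∈ U2 := by rw [hU2]; simp
      have hdec := det_of_condEnt_zero hq hp0 (hCorr U2 k1 hk1mem)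
      obtain ⟨ψ2, hψ2⟩ := hY U2 k1 hk1mem
      have hYeq : Y U2 k1 ω'' = Y U2 k1 ω := by
        have hfun : (fun u : {u // u ∈ U2} => X u.1 ω'') = (fun u => X u.1 ω) :=
          funext fun u => hXall u.1
        rw [hψ2 ω'', hψ2 ω, hfun]
      have hk1ne : k1 ≠ k0 := fun h => hk01 h.symm
      have hBeq : (fun ω2 => (Y U2 k1 ω2, W k1 ω2, Z k1 ω2)) ω''
          = (fun ω2 => (Y U2 k1 ω2, W k1 ω2, Z k1 ω2)) ω := by
        simp only [Prod.mk.injEq]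
        refine ⟨hYeq, ?_, hZ'' k1⟩
        have hwk1 : w'' k1 = W k1 ω := by rw [hw'']; simp [hk1ne]
        rw [hW'' k1, hwk1]
      have hsum := hdec ω'' ω hω'' hω hBeq
      simp only [hU2] at hsum
      rw [Finset.sum_pair hk01, Finset.sum_pair hk01] at hsum
      have hWk1 : W k1 ω'' = W k1 ω := by
        have hwk1 : w'' k1 = W k1 ω := by rw [hw'']; simp [hk1ne]
        rw [hW'' k1, hwk1]
      rw [hWk1] at hsum
      have hWk0 : W k0 ω'' = W k0 ω := add_right_cancel hsum
      rw [hW'' k0, hwk0] at hWk0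
      exact hWk0.symm
    -- step 2 : total sum agrees
    have hdecU := det_of_condEnt_zero hq hp0 (hCorr Finset.univ k0 (Finset.mem_univ _))
    have hS : ∑ u, W u ω = ∑ u, W u ω' := by
      refine hdecU ω ω' hω hω' ?_
      simp only [Prod.mk.injEq]
      exact ⟨hYU, hW1, hZeq⟩
    -- step 3 : partial sums agree
    have hSj : ∀ j : {j : Fin K // 2 ≤ (j : ℕ)},
        ∑ u ∈ Finset.univ.erase j.1, W u ω = ∑ u ∈ Finset.univ.erase j.1, W u ω' := by
      intro j
      have hdecj := det_of_condEnt_zero hq hp0 (hCorr (Finset.univ.erase j.1) k0 (hk0mem j))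
      refine hdecj ω ω' hω hω' ?_
      simp only [Prod.mk.injEq]
      exact ⟨hYj j, hW1, hZeq⟩
    -- step 4 : all coordinates agree
    have hcoord2 : ∀ k : Fin K, 2 ≤ (k : ℕ) → W k ω = W k ω' := by
      intro k hk
      have h1 := Finset.sum_erase_add Finset.univ (fun u => W u ω) (Finset.mem_univ k)
      have h2 := Finset.sum_erase_add Finset.univ (fun u => W u ω') (Finset.mem_univ k)
      have e := hSj ⟨k, hk⟩
      simp only at h1 h2 e
      have : W k ω = ∑ u, W u ω - ∑ u ∈ Finset.univ.erase k, W u ω := by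
        rw [← h1]; abel
      rw [this, hS, e]
      rw [← h2]; abel
    have hcoord : ∀ k : Fin K, W k ω = W k ω' := by
      intro k
      rcases Nat.lt_or_ge (k : ℕ) 1 with hlt | hge
      · have : k = k0 := by
          apply Fin.ext
          simp [hk0def]
          omega
        rw [this]; exact hW1
      · rcases Nat.lt_or_ge (k : ℕ) 2 with hlt2 | hge2
        · -- k = k1
          have hkk1 : k = k1 := by
            apply Fin.ext
            simp [hk1def]
            omega
          rw [hkk1]
          have h1 := Finset.sum_erase_add Finset.univ (fun u => W u ω) (Finset.mem_univ k1)
          have h2 := Finset.sum_erase_add Finset.univ (fun u => W u ω') (Finset.mem_univ k1)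
          have hk1val : (k1 : ℕ) = 1 := by simp [hk1def]
          have herase : ∑ u ∈ Finset.univ.erase k1, W u ω
              = ∑ u ∈ Finset.univ.erase k1, W u ω' := by
            refine Finset.sum_congr rfl fun u hu => ?_
            have hune : u ≠ k1 := (Finset.mem_erase.1 hu).1
            rcases Nat.lt_or_ge (u : ℕ) 1 with h' | h'
            · have : u = k0 := by
                apply Fin.ext; simp [hk0def]; omega
              rw [this]; exact hW1
            · rcases Nat.lt_or_ge (u : ℕ) 2 with h'' | h''
              · exfalso
                apply hune
                apply Fin.ext
                omega
              · exact hcoord2 u h''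
          have : W k1 ω = ∑ u, W u ω - ∑ u ∈ Finset.univ.erase k1, W u ω := by
            rw [← h1]; abel
          rw [this, hS, herase, ← h2]; abel
        · exact hcoord2 k hge2
    rw [hWt]
    funext k
    exact hcoord k
  -- assemble
  have hkey : nent p Wt + nent p C ≤ nent p (fun ω => (Z1 ω, C ω)) := by
    have e1 : nent p (fun ω => (Wt ω, (Z1 ω, C ω))) = nent p (fun ω => (Z1 ω, C ω)) :=
      nent_pair_eq_of_det hp0 hdet
    have e2 : nent p (fun ω => (Z1 ω, (Wt ω, C ω)))
        = nent p (fun ω => (Wt ω, (Z1 ω, C ω))) :=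
      nent_comp_inj
        (f := fun t : (Fin K → Fin L → F) × ((Fin LZ → F) ×
          ((Fin LX → F) × (Fin LY → F) × ({j : Fin K // 2 ≤ (j : ℕ)} → Fin LY → F))) =>
          (t.2.1, (t.1, t.2.2)))
        (fun x y h => by
          have h1 := congrArg (fun t => t.1) h
          have h2 := congrArg (fun t => t.2.1) h
          have h3 := congrArg (fun t => t.2.2) h
          simp at h1 h2 h3
          exact Prod.ext h2 (Prod.ext h1 h3))
        (fun ω => (Wt ω, (Z1 ω, C ω)))
    have e3 : nent p (fun ω => (Wt ω, C ω)) ≤ nent p (fun ω => (Z1 ω, (Wt ω, C ω))) :=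
      nent_pair_ge_snd hp0 Z1 (fun ω => (Wt ω, C ω))
    linarith
  have hsubadd : nent p (fun ω => (Z1 ω, C ω)) ≤ nent p Z1 + nent p C :=
    nent_pair_le_add hp0 hp1 Z1 C
  have hZmax : nent p Z1 ≤ (LZ : ℝ) * Real.log q := by
    have h := nent_le_log_card hp0 hp1 Z1
    have : Real.log (Fintype.card (Fin LZ → F)) = (LZ : ℝ) * Real.log q := by
      rw [Fintype.card_fun]
      simp only [Fintype.card_fin]
      push_cast
      rw [Real.log_pow]
    linarith [this ▸ h]
  -- the four conclusions
  have main1 : (K : ℝ) * (L : ℝ) ≤ condEnt q p Z1 C := by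
    unfold condEnt
    rw [ent_eq_nent, ent_eq_nent, div_sub_div_same, le_div_iff₀ hlq]
    linarith [hkey, hWent]
  have main2 : (K : ℝ) * (L : ℝ) ≤ ent q p Z1 := by
    rw [ent_eq_nent, le_div_iff₀ hlq]
    linarith [hkey, hsubadd, hWent]
  have main3r : (K : ℝ) * (L : ℝ) ≤ (LZ : ℝ) := by
    have h1 : ((K : ℝ) * (L : ℝ)) * Real.log q ≤ (LZ : ℝ) * Real.log q := by
      have := main2
      rw [ent_eq_nent, le_div_iff₀ hlq] at this
      linarith
    have := (mul_le_mul_iff_of_pos_right hlq).1 h1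
    exact this
  have main3 : K * L ≤ LZ := by exact_mod_cast main3r
  have hL0 : (0:ℝ) < (L : ℝ) := by exact_mod_cast (by omega : 0 < L)
  have main4 : (K : ℝ) ≤ (LZ : ℝ) / (L : ℝ) := by
    rw [le_div_iff₀ hL0]
    exact main3r
  exact ⟨main1, main2, main3, main4⟩
end

section
/- (Deterministic server-message counting) In the secure aggregation with an oblivious server model, assume correctness holds almost surely. Then for every user k ∈ [K], every key realization (z_1,…,z_K) in the support of (Z_1,…,Z_K), and every fixed w_k ∈ (F_q)^L, the map f sending (w_u)_{u∈[K]\{k}} to ψ_k(φ_1(w_1,z_1), …, φ_K(w_K,z_K)) satisfies: whenever f((w_u)_{u≠k}) = f((w'_u)_{u≠k}), then Σ_{u≠k} w_u = Σ_{u≠k} w'_u. In particular the image of f has at least q^L elements, so q^{L_Y} ≥ q^L, i.e., L_Y ≥ L. -/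
open Classical
open scoped BigOperators

/-!
Correctness says that user `k`'s view `(Y_k, w_k, z_k)` determines `Σ_u w_u`; once `w_k` is
fixed, `Y_k` therefore determines `Σ_{u ≠ k} w_u`. Letting one other user `j ≠ k` range over all
of `F^L` while everyone else inputs `0` makes this partial sum take every value, so `Y_k` takes at
least `q^L` values.
-/

theorem sum_pr_eq_sum {Ω α : Type*} [Fintype Ω] [Fintype α] (p : Ω → ℝ) (X : Ω → α) :
    ∑ a, pr p (fun ω => X ω = a) = ∑ ω, p ω := by
  simp only [pr]
  rw [Finset.sum_comm]
  simp

theorem exists_pr_ne_zero {Ω α : Type*} [Fintype Ω] [Fintype α] {p : Ω → ℝ}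
    (hp1 : ∑ ω, p ω = 1) (X : Ω → α) : ∃ a, pr p (fun ω => X ω = a) ≠ 0 := by
  by_contra! h
  simp [← sum_pr_eq_sum p X, h] at hp1

section SumErase

variable {ι M : Type*} [Fintype ι] [DecidableEq ι] [AddCommGroup M]

theorem sum_erase_eq_of_sum_eq {w w' : ι → M} {k : ι} (hk : w k = w' k)
    (h : ∑ u, w u = ∑ u, w' u) :
    ∑ u ∈ Finset.univ.erase k, w u = ∑ u ∈ Finset.univ.erase k, w' u := by
  rw [Finset.sum_erase_eq_sub (Finset.mem_univ k), Finset.sum_erase_eq_sub (Finset.mem_univ k),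
    h, hk]

theorem card_le_of_determines_sum_erase [Fintype M] {β : Type*} [Fintype β]
    {g : (ι → M) → β} {j k : ι} (hjk : j ≠ k)
    (hg : ∀ w w', w k = w' k → g w = g w' →
      ∑ u ∈ Finset.univ.erase k, w u = ∑ u ∈ Finset.univ.erase k, w' u) :
    Fintype.card M ≤ Fintype.card β := by
  have sum_single (s : M) : ∑ u ∈ Finset.univ.erase k, Pi.single j s u = s := by
    simp [Finset.sum_pi_single', hjk]
  refine Fintype.card_le_of_injective (fun s => g (Pi.single j s)) fun s s' hss => ?_
  simpa only [sum_single] using hg _ _ (by simp [Pi.single_eq_of_ne' hjk]) hss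

end SumErase

theorem deterministic_server_message_counting_general
    (F : Type) [Field F] [Fintype F]
    (K L LX LY : ℕ) (hK : 2 ≤ K)
    (Ω : Type) [Fintype Ω] (p : Ω → ℝ)
    (hp1 : (∑ ω, p ω) = 1)
    (ZT : Fin K → Type) [∀ k, Fintype (ZT k)]
    (Z : (k : Fin K) → Ω → ZT k)
    -- deterministic encoders, server maps and decoders
    (φ : (k : Fin K) → (Fin L → F) → ZT k → Fin LX → F)
    (ψ : Fin K → (Fin K → Fin LX → F) → Fin LY → F)
    (dec : (k : Fin K) → (Fin LY → F) → (Fin L → F) → ZT k → Fin L → F)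
    -- correctness with probability 1: for every key realization in the support of
    -- the keys and every input realization, user k decodes the sum
    (hCorr : ∀ (k : Fin K) (w : Fin K → Fin L → F) (z : (u : Fin K) → ZT u),
      pr p (fun ω => ∀ u, Z u ω = z u) ≠ 0 →
      dec k (ψ k (fun u => φ u (w u) (z u))) (w k) (z k) = ∑ u, w u) :
    (∀ (k : Fin K) (z : (u : Fin K) → ZT u),
      pr p (fun ω => ∀ u, Z u ω = z u) ≠ 0 →
      ∀ (wk : Fin L → F) (w w' : Fin K → Fin L → F), w k = wk → w' k = wk →
        ψ k (fun u => φ u (w u) (z u)) = ψ k (fun u => φ u (w' u) (z u)) →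
        (∑ u ∈ Finset.univ.erase k, w u) = ∑ u ∈ Finset.univ.erase k, w' u) ∧
    Fintype.card F ^ L ≤ Fintype.card F ^ LY ∧ L ≤ LY := by
  have separates : ∀ (k : Fin K) (z : (u : Fin K) → ZT u),
      pr p (fun ω => ∀ u, Z u ω = z u) ≠ 0 →
      ∀ (wk : Fin L → F) (w w' : Fin K → Fin L → F), w k = wk → w' k = wk →
        ψ k (fun u => φ u (w u) (z u)) = ψ k (fun u => φ u (w' u) (z u)) →
        (∑ u ∈ Finset.univ.erase k, w u) = ∑ u ∈ Finset.univ.erase k, w' u := by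
    rintro k z hz wk w w' rfl hw' hψ
    refine sum_erase_eq_of_sum_eq hw'.symm ?_
    rw [← hCorr k w z hz, ← hCorr k w' z hz, hψ, hw']
  obtain ⟨z, hz⟩ := exists_pr_ne_zero hp1 (fun ω u => Z u ω)
  simp only [funext_iff] at hz
  have hcard : Fintype.card F ^ L ≤ Fintype.card F ^ LY := by
    have hjk : (⟨1, hK⟩ : Fin K) ≠ ⟨0, by omega⟩ := by simp
    simpa only [Fintype.card_fun, Fintype.card_fin] using
      card_le_of_determines_sum_erase (g := fun w => ψ _ fun u => φ u (w u) (z u)) hjk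
        fun w w' hk hψ => separates _ z hz _ w w' rfl hk.symm hψ
  exact ⟨separates, hcard, (Nat.pow_le_pow_iff_right Fintype.one_lt_card).mp hcard⟩

/-- **Deterministic server-message counting.** In the deterministic form of the
oblivious-server model, if correctness holds almost surely then for every user
`k`, every key realization `z` in the support of `(Z_1, …, Z_K)` and every fixed
`w_k`, the map `f : (w_u)_{u ≠ k} ↦ ψ_k(φ_1(w_1, z_1), …, φ_K(w_K, z_K))`
separates the sums `Σ_{u ≠ k} w_u`: equal outputs force equal sums. In
particular the image of `f` has at least `q^L` elements, so `q^{L_Y} ≥ q^L`,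
i.e. `L_Y ≥ L`. -/
theorem deterministic_server_message_counting
    (F : Type) [Field F] [Fintype F]
    (K L LX LY : ℕ) (hK : 2 ≤ K) (hL : 1 ≤ L)
    (Ω : Type) [Fintype Ω] (p : Ω → ℝ)
    (hp0 : ∀ ω, 0 ≤ p ω) (hp1 : (∑ ω, p ω) = 1)
    (ZT : Fin K → Type) [∀ k, Fintype (ZT k)]
    (Z : (k : Fin K) → Ω → ZT k)
    -- deterministic encoders, server maps and decoders
    (φ : (k : Fin K) → (Fin L → F) → ZT k → Fin LX → F)
    (ψ : Fin K → (Fin K → Fin LX → F) → Fin LY → F)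
    (dec : (k : Fin K) → (Fin LY → F) → (Fin L → F) → ZT k → Fin L → F)
    -- correctness with probability 1: for every key realization in the support of
    -- the keys and every input realization, user k decodes the sum
    (hCorr : ∀ (k : Fin K) (w : Fin K → Fin L → F) (z : (u : Fin K) → ZT u),
      pr p (fun ω => ∀ u, Z u ω = z u) ≠ 0 →
      dec k (ψ k (fun u => φ u (w u) (z u))) (w k) (z k) = ∑ u, w u) :
    (∀ (k : Fin K) (z : (u : Fin K) → ZT u),
      pr p (fun ω => ∀ u, Z u ω = z u) ≠ 0 →
      ∀ (wk : Fin L → F) (w w' : Fin K → Fin L → F), w k = wk → w' k = wk →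
        ψ k (fun u => φ u (w u) (z u)) = ψ k (fun u => φ u (w' u) (z u)) →
        (∑ u ∈ Finset.univ.erase k, w u) = ∑ u ∈ Finset.univ.erase k, w' u) ∧
    Fintype.card F ^ L ≤ Fintype.card F ^ LY ∧ L ≤ LY :=
  deterministic_server_message_counting_general F K L LX LY hK Ω p hp1 ZT Z φ ψ dec hCorr
end
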